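/- If a finitary inference procedure I satisfies DI1 and enforces minimal default independence, then I is not representation independent. -/

import Mathlib

/-- A probability measure (probability mass function) on a finite type. -/
structure PM (X : Type) [Fintype X] where
  pm : X → ℝ
  nonneg : ∀ x, 0 ≤ pm x
  total : ∑ x, pm x = 1

namespace PM

variable {X Y : Type} [Fintype X] [Fintype Y]

/-- The probability of a set `S`: `μ(S) = ∑_{x ∈ S} μ(x)`. -/
noncomputable def prob (μ : PM X) (S : Set X) : ℝ := ∑ x, S.indicator μ.pm x

lemma prob_nonneg (μ : PM X) (S : Set X) : 0 ≤ μ.prob S :=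
  Finset.sum_nonneg fun x _ => Set.indicator_apply_nonneg fun _ => μ.nonneg x

/-- Marginal on the first component: `μ_X(A) = μ(A × Y)`. -/
noncomputable def margFst (μ : PM (X × Y)) : PM X where
  pm x := ∑ y, μ.pm (x, y)
  nonneg x := Finset.sum_nonneg fun y _ => μ.nonneg (x, y)
  total := by rw [← μ.total, ← Fintype.sum_prod_type]

/-- Marginal on the second component: `μ_Y(B) = μ(X × B)`. -/
noncomputable def margSnd (μ : PM (X × Y)) : PM Y where
  pm y := ∑ x, μ.pm (x, y)
  nonneg y := Finset.sum_nonneg fun x _ => μ.nonneg (x, y)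
  total := by rw [← μ.total, ← Fintype.sum_prod_type_right]

/-- Conditioning `μ|S`; the junk value `μ` is returned when `μ(S) = 0`. -/
noncomputable def cond (μ : PM X) (S : Set X) : PM X :=
  if h : 0 < μ.prob S then
    { pm := fun x => S.indicator μ.pm x / μ.prob S
      nonneg := fun x =>
        div_nonneg (Set.indicator_apply_nonneg fun _ => μ.nonneg x) (le_of_lt h)
      total := by
        rw [← Finset.sum_div]
        exact div_self (ne_of_gt h) }
  else μ

end PM

open PM

/-- An `X`-inference procedure: a partial map on sets of probability measures. -/
structure InfProc (X : Type) [Fintype X] where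
  dom : Set (Set (PM X))
  map : Set (PM X) → Set (PM X)
  map_subset : ∀ A ∈ dom, map A ⊆ A
  map_empty_iff : ∀ A ∈ dom, (map A = ∅ ↔ A = ∅)

/-- `KB ⊢_I θ`. -/
def Infers {X : Type} [Fintype X] (I : InfProc X) (KB θ : Set (PM X)) : Prop :=
  I.map KB ⊆ θ

section Lift

variable {X Y : Type} [Fintype X] [Fintype Y]

/-- A constraint on `Δ_X` viewed as a constraint on `Δ_{X×Y}`: `KB↑`. -/
def liftKB (Y : Type) [Fintype Y] (KB : Set (PM X)) : Set (PM (X × Y)) :=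
  {μ | margFst μ ∈ KB}

/-- `proj_X(B) = {μ_X : μ ∈ B}`. -/
def projFst (B : Set (PM (X × Y))) : Set (PM X) := margFst '' B

/-- `ψ ⊆ Δ_{X×Y}` is `X`-conservative over `KB ⊆ Δ_X`. -/
def Conservative (KB : Set (PM X)) (ψ : Set (PM (X × Y))) : Prop :=
  projFst (liftKB Y KB ∩ ψ) = KB

end Lift

/-- Robustness of a finitary inference procedure. -/
def Robust (I : ∀ (X : Type) [Fintype X], InfProc X) : Prop :=
  ∀ (X Y : Type) [Fintype X] [Fintype Y], ∀ KB φ : Set (PM X),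
    KB ∈ (I X).dom → ∀ ψ : Set (PM (X × Y)), Conservative KB ψ →
      (Infers (I X) KB φ ↔ Infers (I (X × Y)) (liftKB Y KB ∩ ψ) (liftKB Y φ))

/-- An inference procedure is essentially entailment. -/
def EssEntail {X : Type} [Fintype X] (I : InfProc X) : Prop :=
  ∀ KB ∈ I.dom, ∀ (S : Set X) (α β : ℝ),
    Infers I KB {μ | α < μ.prob S ∧ μ.prob S < β} →
    KB ⊆ {μ | α ≤ μ.prob S ∧ μ.prob S ≤ β}

def DI1 (I : ∀ (X : Type) [Fintype X], InfProc X) : Prop :=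
  ∀ (X : Type) [Fintype X], ∀ (S : Set X) (α β : ℝ), α ≤ β →
    {μ : PM X | α ≤ μ.prob S ∧ μ.prob S ≤ β} ∈ (I X).dom

def DI2 (I : ∀ (X : Type) [Fintype X], InfProc X) : Prop :=
  ∀ (X Y : Type) [Fintype X] [Fintype Y], ∀ KB : Set (PM X),
    KB ∈ (I X).dom → liftKB Y KB ∈ (I (X × Y)).dom

def DI3 (I : ∀ (X : Type) [Fintype X], InfProc X) : Prop :=
  ∀ (X : Type) [Fintype X], ∀ KB₁ KB₂ : Set (PM X),
    KB₁ ∈ (I X).dom → KB₂ ∈ (I X).dom → KB₁ ∩ KB₂ ∈ (I X).dom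

/-- An `X`-`Y` embedding: a homomorphism of set algebras. -/
structure Emb (X Y : Type) where
  f : Set X → Set Y
  map_union : ∀ S T, f (S ∪ T) = f S ∪ f T
  map_compl : ∀ S, f Sᶜ = (f S)ᶜ

/-- A faithful embedding. -/
def Emb.Faithful {X Y : Type} (e : Emb X Y) : Prop :=
  ∀ S T : Set X, S ⊆ T ↔ e.f S ⊆ e.f T

section Embeddings

variable {X Y : Type} [Fintype X] [Fintype Y]

/-- `μ` and `ν` correspond under `f`. -/
def Corr (e : Emb X Y) (μ : PM X) (ν : PM Y) : Prop :=
  ∀ S : Set X, μ.prob S = ν.prob (e.f S)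

/-- `f*(D)`, the union over `μ ∈ D` of the measures corresponding to `μ`. -/
def fstar (e : Emb X Y) (D : Set (PM X)) : Set (PM Y) :=
  {ν | ∃ μ ∈ D, Corr e μ ν}

/-- Sets of measures `D_X` and `D_Y` correspond under `f`. -/
def SetCorr (e : Emb X Y) (DX : Set (PM X)) (DY : Set (PM Y)) : Prop :=
  (∀ ν ∈ DY, ∃ μ ∈ DX, Corr e μ ν) ∧ (∀ μ ∈ DX, ∃ ν ∈ DY, Corr e μ ν)

end Embeddings

/-- Representation independence of a finitary inference procedure. -/
def RepInd (I : ∀ (X : Type) [Fintype X], InfProc X) : Prop :=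
  ∀ (X Y : Type) [Fintype X] [Fintype Y] (e : Emb X Y), e.Faithful →
    (∀ KB : Set (PM X), KB ∈ (I X).dom ↔ fstar e KB ∈ (I Y).dom) ∧
    (∀ KB : Set (PM X), KB ∈ (I X).dom → ∀ θ : Set (PM X),
      (Infers (I X) KB θ ↔ Infers (I Y) (fstar e KB) (fstar e θ)))

def DI4 (I : ∀ (X : Type) [Fintype X], InfProc X) : Prop :=
  ∀ (X Y : Type) [Fintype X] [Fintype Y] (e : Emb X Y), e.Faithful →
    ∀ KB : Set (PM X), (KB ∈ (I X).dom ↔ fstar e KB ∈ (I Y).dom)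

/-- `A ⇔ B` for sets of measures. -/
def iffSet {α : Type*} (A B : Set α) : Set α := (A ∩ B) ∪ (Aᶜ ∩ Bᶜ)

def DI5 (I : ∀ (X : Type) [Fintype X], InfProc X) : Prop :=
  ∀ (X Y : Type) [Fintype X] [Fintype Y] (KB : Set (PM (X × Y))) (e : Emb X Y),
    e.Faithful → KB ∈ (I (X × Y)).dom → ∀ φ₁ : Set (PM X),
      KB ∩ iffSet (liftKB Y φ₁) {μ | margSnd μ ∈ fstar e φ₁} ∈ (I (X × Y)).dom

/-- Minimal default independence. -/
def MDI (I : ∀ (X : Type) [Fintype X], InfProc X) : Prop :=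
  ∀ (X Y : Type) [Fintype X] [Fintype Y], ∀ KB : Set (PM X), ∀ (S : Set X) (T : Set Y),
    liftKB Y KB ∈ (I (X × Y)).dom →
    Infers (I (X × Y)) (liftKB Y KB)
      {μ | μ.prob (S ×ˢ T) = μ.prob (S ×ˢ (Set.univ : Set Y)) * μ.prob ((Set.univ : Set X) ×ˢ T)}

/-- `KB` depends only on `S₁, …, S_k`. -/
def DependsOnly {X : Type} [Fintype X] {k : ℕ} (KB : Set (PM X)) (S : Fin k → Set X) : Prop :=
  ∀ μ μ' : PM X, (∀ i, μ.prob (S i) = μ'.prob (S i)) → (μ ∈ KB ↔ μ' ∈ KB)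

/-- An atom over `S₁, …, S_k`. -/
def Atom {X : Type} {k : ℕ} (S : Fin k → Set X) (c : Fin k → Bool) : Set X :=
  ⋂ i, (if c i then S i else (S i)ᶜ)

section KL

variable {X : Type} [Fintype X]

/-- Absolute continuity of pmfs. -/
def AbsCont (μ' μ : PM X) : Prop := ∀ x, μ.pm x = 0 → μ'.pm x = 0

/-- Relative entropy `D(μ'‖μ) ∈ [0,∞]` (it is `⊤` unless `μ' ≪ μ`). -/
noncomputable def KL (μ' μ : PM X) : EReal := by
  classical
  exact if AbsCont μ' μ then
    ((∑ x, μ'.pm x * Real.log (μ'.pm x / μ.pm x) : ℝ) : EReal)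
  else ⊤

/-- The relative-entropy projection `μ|θ`. -/
def klProj (μ : PM X) (θ : Set (PM X)) : Set (PM X) :=
  {μ' | μ' ∈ θ ∧ KL μ' μ ≠ ⊤ ∧ ∀ μ'' ∈ θ, KL μ' μ ≤ KL μ'' μ}

/-- `D|θ = ⋃_{μ ∈ D} μ|θ`. -/
def DProj (D : Set (PM X)) (θ : Set (PM X)) : Set (PM X) :=
  ⋃ μ ∈ D, klProj μ θ

end KL

section Products

variable {n : ℕ} {X : Fin n → Type} [∀ i, Fintype (X i)]

/-- The `i`-th marginal of a measure on a finite product. -/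
noncomputable def margPi (μ : PM (∀ i, X i)) (i : Fin n) : PM (X i) where
  pm a := μ.prob {x | x i = a}
  nonneg a := PM.prob_nonneg _ _
  total := by
    classical
    unfold PM.prob
    rw [Finset.sum_comm]
    have h : ∀ x : (∀ i, X i),
        (∑ a, ({y : ∀ j, X j | y i = a}).indicator μ.pm x) = μ.pm x := by
      intro x
      simp [Set.indicator_apply]
    simp only [h]
    exact μ.total

/-- `μ` is a product measure on `X₁ × ⋯ × Xₙ`. -/
def IsProdPM (μ : PM (∀ i, X i)) : Prop :=
  ∃ μi : ∀ i, PM (X i), ∀ U : ∀ i, Set (X i),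
    μ.prob {x | ∀ i, x i ∈ U i} = ∏ i, (μi i).prob (U i)

end Products

/-- The set `P_Π(X)` of product measures. -/
def PPi {n : ℕ} (X : Fin n → Type) [∀ i, Fintype (X i)] : Set (PM (∀ i, X i)) :=
  {μ | IsProdPM μ}

/-- `e` is a product embedding. -/
def IsProdEmb {n : ℕ} {X Y : Fin n → Type} (e : Emb (∀ i, X i) (∀ i, Y i)) : Prop :=
  ∃ ei : ∀ i, Emb (X i) (Y i), ∀ S : Set (∀ i, X i),
    e.f S = ⋃ x ∈ S, {y | ∀ i, y i ∈ (ei i).f {x i}}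

/-! Take `KB = {μ(true) = 1/3}` on `Bool`. Minimal default independence makes the two
coordinates of `Bool × Bool` independent under `KB↑`. Now refine the second coordinate in
three ways: `splitMap i` sends `(true, k)` to second coordinate `true` iff `k ∈ {i, i + 1}`,
and `(false, k)` iff `k = i`. The three pullback embeddings are faithful and all transport
`KB↑` to the same constraint on `Bool × Fin 3`, so a representation-independent procedure
picks a single `ν` under which the first coordinate is independent of all three refined
events. Summing the three independence equations gives `2a = a (2a + (1 - a))` for
`a = ν(true × Fin 3) = 1/3`, which is impossible. -/

namespace PM

variable {X Y Z : Type} [Fintype X] [Fintype Y] [Fintype Z]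

theorem ext {μ ν : PM X} (h : μ.pm = ν.pm) : μ = ν := by
  cases μ; cases ν; congr

theorem prob_singleton (μ : PM X) (x : X) : μ.prob {x} = μ.pm x := by
  classical
  simp [prob, Set.indicator_apply]

theorem prob_preimage_eq_sum (μ : PM X) (q : X → Y) (S : Set Y) :
    μ.prob (q ⁻¹' S) = ∑ y, S.indicator (fun y => μ.prob (q ⁻¹' {y})) y := by
  classical
  simp only [prob, Set.indicator_apply, Set.mem_preimage, Set.mem_singleton_iff,
    Finset.ite_sum_zero]
  rw [Finset.sum_comm]
  refine Finset.sum_congr rfl fun x _ => ?_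
  rw [Fintype.sum_eq_single (q x) fun y hy => by simp [Ne.symm hy]]
  simp

noncomputable def map (q : X → Y) (μ : PM X) : PM Y where
  pm y := μ.prob (q ⁻¹' {y})
  nonneg y := μ.prob_nonneg _
  total := by
    have h := μ.prob_preimage_eq_sum q Set.univ
    simp only [Set.indicator_univ, Set.preimage_univ] at h
    rw [← h, prob]
    simpa using μ.total

theorem map_prob (q : X → Y) (μ : PM X) (S : Set Y) :
    (μ.map q).prob S = μ.prob (q ⁻¹' S) :=
  (μ.prob_preimage_eq_sum q S).symm

theorem map_map (g : X → Y) (f : Y → Z) (μ : PM X) : (μ.map g).map f = μ.map (f ∘ g) :=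
  ext <| funext fun _ => map_prob g μ _

theorem map_id (μ : PM X) : μ.map id = μ :=
  ext <| funext μ.prob_singleton

theorem exists_map_eq {q : X → Y} (hq : Function.Surjective q) (μ : PM Y) :
    ∃ ν : PM X, ν.map q = μ := by
  obtain ⟨s, hs⟩ := hq.hasRightInverse
  exact ⟨μ.map s, by rw [map_map, hs.comp_eq_id, map_id]⟩

theorem margFst_eq_map (μ : PM (X × Y)) : margFst μ = μ.map Prod.fst := by
  classical
  refine ext <| funext fun x => ?_
  simp only [margFst, map, prob, Set.indicator_apply, Fintype.sum_prod_type, Set.mem_preimage,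
    Set.mem_singleton_iff]
  rw [Fintype.sum_eq_single x fun x' hx' => by simp [hx']]
  simp

end PM

def Emb.preimage {X Y : Type} (q : X → Y) : Emb Y X where
  f S := q ⁻¹' S
  map_union _ _ := rfl
  map_compl _ := rfl

theorem Emb.faithful_preimage {X Y : Type} {q : X → Y} (hq : Function.Surjective q) :
    (Emb.preimage q).Faithful :=
  fun _ _ => hq.preimage_subset_preimage_iff.symm

section Preimage

variable {X Y Z : Type} [Fintype X] [Fintype Y] [Fintype Z]

theorem corr_preimage_iff {q : Z → X} {μ : PM X} {ν : PM Z} :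
    Corr (Emb.preimage q) μ ν ↔ μ = ν.map q := by
  refine ⟨fun h => PM.ext <| funext fun x => ?_, fun h S => h ▸ PM.map_prob q ν S⟩
  rw [← μ.prob_singleton, h]
  rfl

theorem fstar_preimage (q : Z → X) (D : Set (PM X)) :
    fstar (Emb.preimage q) D = PM.map q ⁻¹' D := by
  ext ν
  simp [fstar, corr_preimage_iff]

theorem liftKB_eq_preimage (KB : Set (PM X)) : liftKB Y KB = PM.map Prod.fst ⁻¹' KB := by
  ext μ
  simp [liftKB, PM.margFst_eq_map]

theorem fstar_preimage_liftKB (q : Z → X × Y) (KB : Set (PM X)) :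
    fstar (Emb.preimage q) (liftKB Y KB) = PM.map (Prod.fst ∘ q) ⁻¹' KB := by
  ext ν
  simp [fstar_preimage, liftKB_eq_preimage, PM.map_map]

end Preimage

def indepRect {X Y : Type} [Fintype X] [Fintype Y] (S : Set X) (T : Set Y) :
    Set (PM (X × Y)) :=
  {μ | μ.prob (S ×ˢ T) = μ.prob (S ×ˢ Set.univ) * μ.prob (Set.univ ×ˢ T)}

theorem InfProc.map_nonempty {X : Type} [Fintype X] (I : InfProc X) {A : Set (PM X)}
    (hA : A ∈ I.dom) (hne : A.Nonempty) : (I.map A).Nonempty :=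
  Set.nonempty_iff_ne_empty.2 fun h => hne.ne_empty ((I.map_empty_iff A hA).1 h)

namespace RepInd

variable {I : ∀ (X : Type) [Fintype X], InfProc X} {X Y Z : Type} [Fintype X] [Fintype Y]
  [Fintype Z] {KB : Set (PM X)} {q : Z → X × Y} {p : Z → X}

theorem preimage_mem_dom (hRI : RepInd I) (hKB : liftKB Y KB ∈ (I (X × Y)).dom)
    (hq : Function.Surjective q) (hp : Prod.fst ∘ q = p) : PM.map p ⁻¹' KB ∈ (I Z).dom := by
  have h := ((hRI _ _ _ (Emb.faithful_preimage hq)).1 _).1 hKB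
  rwa [fstar_preimage_liftKB, hp] at h

theorem map_mem_indepRect (hRI : RepInd I) (hmdi : MDI I)
    (hKB : liftKB Y KB ∈ (I (X × Y)).dom) (hq : Function.Surjective q) (hp : Prod.fst ∘ q = p)
    {ν : PM Z} (hν : ν ∈ (I Z).map (PM.map p ⁻¹' KB)) (S : Set X) (T : Set Y) :
    ν.map q ∈ indepRect S T := by
  have h := ((hRI _ _ _ (Emb.faithful_preimage hq)).2 _ hKB _).1 (hmdi X Y KB S T hKB)
  rw [fstar_preimage_liftKB, fstar_preimage, hp] at h
  exact h hν

end RepInd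

def splitMap (i : Fin 3) (z : Bool × Fin 3) : Bool × Bool :=
  (z.1, if z.1 then decide (z.2 = i ∨ z.2 = i + 1) else decide (z.2 = i))

theorem splitMap_surjective (i : Fin 3) : Function.Surjective (splitMap i) := by
  fin_cases i <;> decide

theorem not_forall_map_splitMap_mem_indepRect (ν : PM (Bool × Fin 3))
    (hν : ν.prob (Prod.fst ⁻¹' {true}) ∈ Set.Ioo 0 1) :
    ¬ ∀ i, ν.map (splitMap i) ∈ indepRect {true} {true} := by
  intro h
  have e0 := h 0
  have e1 := h 1
  have e2 := h 2
  have htot := ν.total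
  simp only [indepRect, Set.mem_ofPred_eq, PM.map_prob] at e0 e1 e2
  simp only [PM.prob, Fintype.sum_prod_type, Fintype.sum_bool, Fin.sum_univ_three]
    at e0 e1 e2 hν htot
  simp [splitMap] at e0 e1 e2 hν
  set a := ν.pm (true, 0) + ν.pm (true, 1) + ν.pm (true, 2)
  have : a * (1 - a) = 0 := by linear_combination e0 + e1 + e2 + a * htot
  exact (mul_pos hν.1 (sub_pos.2 hν.2)).ne' this

/-- no finitary inference procedure satisfying DI1 that enforces
minimal default independence is representation independent. -/
theorem stmt10 (I : ∀ (X : Type) [Fintype X], InfProc X)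
    (h1 : DI1 I) (hmdi : MDI I) :
    ¬ RepInd I := by
  intro hRI
  let KB : Set (PM Bool) := {μ | μ.prob {true} ∈ Set.Icc (1 / 3) (1 / 3)}
  have hKB : liftKB Bool KB ∈ (I (Bool × Bool)).dom := by
    convert h1 (Bool × Bool) (Prod.fst ⁻¹' {true}) (1 / 3) (1 / 3) le_rfl using 1
    ext μ
    simp only [KB, liftKB_eq_preimage, Set.mem_preimage, Set.mem_ofPred_eq, PM.map_prob]
    rfl
  have hKBne : (PM.map Prod.fst ⁻¹' KB : Set (PM (Bool × Fin 3))).Nonempty := by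
    let μ : PM Bool :=
      ⟨fun b => if b then 1 / 3 else 2 / 3, fun b => by cases b <;> norm_num, by norm_num⟩
    obtain ⟨ν, hν⟩ := PM.exists_map_eq (Prod.fst_surjective (β := Fin 3)) μ
    exact ⟨ν, by simp [KB, hν, μ, PM.prob_singleton]⟩
  have hdom := hRI.preimage_mem_dom hKB (splitMap_surjective 0) rfl
  obtain ⟨ν, hν⟩ := (I _).map_nonempty hdom hKBne
  have hνKB : ν.map Prod.fst ∈ KB := (I _).map_subset _ hdom hν
  refine not_forall_map_splitMap_mem_indepRect ν ?_ fun i =>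
    hRI.map_mem_indepRect hmdi hKB (splitMap_surjective i) rfl hν {true} {true}
  simp only [KB, Set.mem_ofPred_eq, PM.map_prob] at hνKB
  norm_num [le_antisymm hνKB.2 hνKB.1]
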